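/- arXiv:2603.24287 — 3 statements merged into one kernel-verified Lean document; each statement's English description precedes it below -/
import Mathlib

section
/- Let b : G → ℕ with b(g) ≤ ν, let V_g be finite-dimensional ℚ-representations of a finite group W, and let V''_g be irreducible representations of W such that: V''_g appears with multiplicity one in V_g, n(V''_g) = b(g), and every other composition factor E' of V_g satisfies n(E') > b(g), where n : Irr(W) → ℕ is a fixed function. Define V'_g by descending induction on b(g) as the sum of all irreducible submodules of V_g not occurring in any V'_{g'} with b(g') > b(g) (with V'_g = V_g when b(g) = ν). Then V''_g appears with multiplicity one in V'_g, and every other composition factor E' of V'_g satisfies n(E') > b(g). -/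
open Module

/-- The rational group algebra of `W`. -/
abbrev GA (W : Type) [Group W] : Type := MonoidAlgebra ℚ W

/-- A finite-dimensional representation of `W` over `ℚ`, viewed as a module
over the group algebra `ℚ[W]`. -/
structure RepQ (W : Type) [Group W] where
  carrier : Type
  [ab : AddCommGroup carrier]
  [modQ : Module ℚ carrier]
  [modA : Module (GA W) carrier]
  [tower : IsScalarTower ℚ (GA W) carrier]
  [fd : FiniteDimensional ℚ carrier]

attribute [instance] RepQ.ab RepQ.modQ RepQ.modA RepQ.tower RepQ.fd

variable {W : Type} [Group W]

/-- Isomorphism of representations. -/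
def RepQ.Iso (V₁ V₂ : RepQ W) : Prop :=
  Nonempty (V₁.carrier ≃ₗ[GA W] V₂.carrier)

/-- `E` is irreducible. -/
def RepQ.IsIrr (E : RepQ W) : Prop := IsSimpleModule (GA W) E.carrier

/-- `E` occurs in `M`, i.e. `E` is isomorphic to a submodule of `M`. -/
def Occ (A : Type) [Ring A] (E M : Type) [AddCommGroup E] [Module A E]
    [AddCommGroup M] [Module A M] : Prop :=
  ∃ S : Submodule A M, Nonempty (E ≃ₗ[A] ↥S)

/-- `E` occurs with multiplicity one in `M` (for semisimple modules over `ℚ[W]`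
this is equivalent to: there is exactly one submodule of `M` isomorphic to `E`). -/
def OccMultOne (A : Type) [Ring A] (E M : Type) [AddCommGroup E] [Module A E]
    [AddCommGroup M] [Module A M] : Prop :=
  Occ A E M ∧ ∀ S₁ S₂ : Submodule A M,
    Nonempty (E ≃ₗ[A] ↥S₁) → Nonempty (E ≃ₗ[A] ↥S₂) → S₁ = S₂

lemma occ_of_occ_sub {A : Type} [Ring A] {E M : Type} [AddCommGroup E] [Module A E]
    [AddCommGroup M] [Module A M] {P : Submodule A M} (h : Occ A E ↥P) : Occ A E M := by
  obtain ⟨T, ⟨e⟩⟩ := h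
  exact ⟨T.map P.subtype,
    ⟨e.trans (Submodule.equivMapOfInjective P.subtype P.injective_subtype T)⟩⟩

/-- `V''_g` appears with multiplicity one in `V'_g`, and every other composition
factor `E'` of `V'_g` satisfies `n E' > b g`. -/
theorem Vsecond_mult_one_in_Vprime (G : Type) (nu : ℕ) (b : G → ℕ) (hb : ∀ g, b g ≤ nu)
    (V : G → RepQ W) (V' : ∀ g, Submodule (GA W) (V g).carrier)
    (htop : ∀ g, b g = nu → V' g = ⊤)
    (hrec : ∀ g, b g < nu → V' g = sSup {S : Submodule (GA W) (V g).carrier |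
      IsSimpleModule (GA W) ↥S ∧ ∀ g', b g < b g' → ¬ Occ (GA W) ↥S ↥(V' g')})
    (n : RepQ W → ℕ) (hn : ∀ E F : RepQ W, E.Iso F → n E = n F)
    (V'' : G → RepQ W) (hirr : ∀ g, (V'' g).IsIrr)
    (hmult : ∀ g, OccMultOne (GA W) (V'' g).carrier (V g).carrier)
    (hnb : ∀ g, n (V'' g) = b g)
    (hother : ∀ g (E : RepQ W), E.IsIrr → Occ (GA W) E.carrier (V g).carrier →
      ¬ E.Iso (V'' g) → n E > b g) :
    ∀ g : G, OccMultOne (GA W) (V'' g).carrier ↥(V' g) ∧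
      ∀ E : RepQ W, E.IsIrr → Occ (GA W) E.carrier ↥(V' g) →
        ¬ E.Iso (V'' g) → n E > b g := by
  have hVother : ∀ g' (E : RepQ W), E.IsIrr → Occ (GA W) E.carrier ↥(V' g') →
      ¬ E.Iso (V'' g') → n E > b g' :=
    fun g' E hE hocc => hother g' E hE (occ_of_occ_sub hocc)
  intro g
  obtain ⟨S₀, ⟨e₀⟩⟩ := (hmult g).1
  have hle : S₀ ≤ V' g := by
    rcases eq_or_lt_of_le (hb g) with h | h
    · rw [htop g h]; exact le_top
    · rw [hrec g h]
      apply le_sSup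
      constructor
      · haveI : IsSimpleModule (GA W) (V'' g).carrier := hirr g
        exact IsSimpleModule.congr e₀.symm
      · intro g' hbg hocc
        obtain ⟨T, ⟨eT⟩⟩ := hocc
        have hoccg : Occ (GA W) (V'' g).carrier ↥(V' g') := ⟨T, ⟨e₀.trans eT⟩⟩
        by_cases hiso : (V'' g).Iso (V'' g')
        · have := hn _ _ hiso
          rw [hnb, hnb] at this
          omega
        · have h1 := hVother g' (V'' g) (hirr g) hoccg hiso
          rw [hnb] at h1
          omega
  refine ⟨⟨⟨S₀.comap (V' g).subtype,
      ⟨e₀.trans (Submodule.comapSubtypeEquivOfLe hle).symm⟩⟩, ?_⟩, hVother g⟩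
  rintro S₁ S₂ ⟨e₁⟩ ⟨e₂⟩
  have h1 := (hmult g).2 (S₁.map (V' g).subtype) (S₂.map (V' g).subtype)
    ⟨e₁.trans (Submodule.equivMapOfInjective _ (V' g).injective_subtype S₁)⟩
    ⟨e₂.trans (Submodule.equivMapOfInjective _ (V' g).injective_subtype S₂)⟩
  exact Submodule.map_injective_of_injective (V' g).injective_subtype h1
end

section
/- Under the hypotheses of the previous setup (V''_g irreducible, multiplicity one in V_g, n(V''_g) = b(g), all other composition factors E' of V_g have n(E') > b(g), and V'_g defined by the descending induction), the following holds: if for some g, g' ∈ G the irreducible representation V''_{g'} occurs in V'_g, then V''_{g'} ≅ V''_g. In particular V''_g is uniquely determined by V'_g. -/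
open Module

variable {W : Type} [Group W]

/-!
If `V''_{g'}` occurs in `V'_g` but is not isomorphic to `V''_g`, then `b g < b g'`, since every
other composition factor of `V_g` has `n > b g`. So `V'_g` is the sum of the simple submodules
of `V_g` that do not occur in `V'_{g'}`, and the copy of `V''_{g'}` inside it is isomorphic to one
of them. But `V''_{g'}` does occur in `V'_{g'}`: its copy in `V_{g'}` cannot occur in any
`V'_{g''}` with `b g'' > b g'`, because it would then be a composition factor of `V_{g''}` with
`n = b g' < b g''`.
-/

namespace Occ

variable {A : Type} [Ring A] {E F M : Type} [AddCommGroup E] [Module A E]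
  [AddCommGroup F] [Module A F] [AddCommGroup M] [Module A M]

lemma of_linearEquiv (e : E ≃ₗ[A] F) (h : Occ A F M) : Occ A E M :=
  let ⟨S, ⟨i⟩⟩ := h
  ⟨S, ⟨e.trans i⟩⟩

lemma of_submodule {P : Submodule A M} (h : Occ A E P) : Occ A E M :=
  let ⟨T, ⟨i⟩⟩ := h
  ⟨T.map P.subtype, ⟨i.trans (T.equivMapOfInjective P.subtype P.injective_subtype)⟩⟩

lemma of_le {S P : Submodule A M} (h : S ≤ P) : Occ A S P :=
  ⟨S.comap P.subtype, ⟨(Submodule.comapSubtypeEquivOfLe h).symm⟩⟩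

lemma exists_linearEquiv_of_sSup [IsSimpleModule A E] {s : Set (Submodule A M)}
    (hs : ∀ S ∈ s, IsSimpleModule A S) (h : Occ A E ↥(sSup s)) :
    ∃ S ∈ s, Nonempty (E ≃ₗ[A] S) := by
  obtain ⟨T, ⟨i⟩⟩ := h
  let i' := i.trans (T.equivMapOfInjective _ (sSup s).injective_subtype)
  have : ∀ S : s, IsSimpleModule A S := fun S ↦ hs S S.2
  have : IsSimpleModule A (T.map (sSup s).subtype) := .congr i'.symm
  obtain ⟨S, hS, ⟨e⟩⟩ := (T.map (sSup s).subtype).linearEquiv_of_le_sSup s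
    (Submodule.map_subtype_le _ _)
  exact ⟨S, hS, ⟨i'.trans e⟩⟩

end Occ

section

variable {G : Type} {b : G → ℕ} {V V'' : G → RepQ W} {n : RepQ W → ℕ}

lemma lt_of_occ_of_not_iso (hirr : ∀ g, (V'' g).IsIrr) (hnb : ∀ g, n (V'' g) = b g)
    (hother : ∀ g (E : RepQ W), E.IsIrr → Occ (GA W) E.carrier (V g).carrier →
      ¬ E.Iso (V'' g) → n E > b g)
    {g g' : G} (hocc : Occ (GA W) (V'' g').carrier (V g).carrier)
    (hiso : ¬ (V'' g').Iso (V'' g)) : b g < b g' :=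
  hnb g' ▸ hother g (V'' g') (hirr g') hocc hiso

lemma le_of_occ (hn : ∀ E F : RepQ W, E.Iso F → n E = n F) (hirr : ∀ g, (V'' g).IsIrr)
    (hnb : ∀ g, n (V'' g) = b g)
    (hother : ∀ g (E : RepQ W), E.IsIrr → Occ (GA W) E.carrier (V g).carrier →
      ¬ E.Iso (V'' g) → n E > b g)
    {g g' : G} (hocc : Occ (GA W) (V'' g').carrier (V g).carrier) : b g ≤ b g' := by
  by_cases hiso : (V'' g').Iso (V'' g)
  · rw [← hnb g, ← hnb g', hn _ _ hiso]
  · exact (lt_of_occ_of_not_iso hirr hnb hother hocc hiso).le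

lemma occ_Vsecond_Vprime_self {nu : ℕ} (hb : ∀ g, b g ≤ nu)
    {V' : ∀ g, Submodule (GA W) (V g).carrier}
    (htop : ∀ g, b g = nu → V' g = ⊤)
    (hrec : ∀ g, b g < nu → V' g = sSup {S : Submodule (GA W) (V g).carrier |
      IsSimpleModule (GA W) ↥S ∧ ∀ g', b g < b g' → ¬ Occ (GA W) ↥S ↥(V' g')})
    (hn : ∀ E F : RepQ W, E.Iso F → n E = n F) (hirr : ∀ g, (V'' g).IsIrr)
    (hocc : ∀ g, Occ (GA W) (V'' g).carrier (V g).carrier)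
    (hnb : ∀ g, n (V'' g) = b g)
    (hother : ∀ g (E : RepQ W), E.IsIrr → Occ (GA W) E.carrier (V g).carrier →
      ¬ E.Iso (V'' g) → n E > b g)
    (g : G) : Occ (GA W) (V'' g).carrier (V' g) := by
  obtain ⟨S, ⟨i⟩⟩ := hocc g
  suffices hS : S ≤ V' g from (Occ.of_le hS).of_linearEquiv i
  rcases (hb g).eq_or_lt with heq | hlt
  · simp [htop g heq]
  have : IsSimpleModule (GA W) (V'' g).carrier := hirr g
  rw [hrec g hlt]
  refine le_sSup ⟨.congr i.symm, fun g'' hlt' hS'' ↦ ?_⟩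
  have hocc'' : Occ (GA W) (V'' g).carrier (V g'').carrier :=
    (hS''.of_linearEquiv i).of_submodule
  exact (le_of_occ hn hirr hnb hother hocc'').not_gt hlt'

end

/-- If `V''_[g']` occurs in `V'_g` then `V''_[g'] ≅ V''_g`; in particular `V''_g`
is uniquely determined by `V'_g`. -/
theorem Vsecond_determined_by_Vprime (G : Type) (nu : ℕ) (b : G → ℕ) (hb : ∀ g, b g ≤ nu)
    (V : G → RepQ W) (V' : ∀ g, Submodule (GA W) (V g).carrier)
    (htop : ∀ g, b g = nu → V' g = ⊤)
    (hrec : ∀ g, b g < nu → V' g = sSup {S : Submodule (GA W) (V g).carrier |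
      IsSimpleModule (GA W) ↥S ∧ ∀ g', b g < b g' → ¬ Occ (GA W) ↥S ↥(V' g')})
    (n : RepQ W → ℕ) (hn : ∀ E F : RepQ W, E.Iso F → n E = n F)
    (V'' : G → RepQ W) (hirr : ∀ g, (V'' g).IsIrr)
    (hmult : ∀ g, OccMultOne (GA W) (V'' g).carrier (V g).carrier)
    (hnb : ∀ g, n (V'' g) = b g)
    (hother : ∀ g (E : RepQ W), E.IsIrr → Occ (GA W) E.carrier (V g).carrier →
      ¬ E.Iso (V'' g) → n E > b g) :
    ∀ g g' : G, Occ (GA W) (V'' g').carrier ↥(V' g) → (V'' g').Iso (V'' g) := by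
  intro g g' hocc
  by_contra hiso
  have hlt : b g < b g' := lt_of_occ_of_not_iso hirr hnb hother hocc.of_submodule hiso
  have : IsSimpleModule (GA W) (V'' g').carrier := hirr g'
  rw [hrec g (hlt.trans_le (hb g'))] at hocc
  obtain ⟨S, ⟨-, hS⟩, ⟨e⟩⟩ := Occ.exists_linearEquiv_of_sSup (fun S hS ↦ hS.1) hocc
  have hself := occ_Vsecond_Vprime_self hb htop hrec hn hirr (fun g ↦ (hmult g).1) hnb hother g'
  exact hS g' hlt (hself.of_linearEquiv e.symm)
end

section
/- Under the same hypotheses, if g₁ ∼ g₂ (i.e. V'_{g₁} ≅ V'_{g₂}), then V''_{g₁} ≅ V''_{g₂}. Hence the partition of G into substrata (fibers of g ↦ V'_g up to isomorphism) refines the partition of G into strata (fibers of g ↦ V''_g up to isomorphism). -/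
open Module

variable {W : Type} [Group W]

/-! The copy of `V''_g` inside `V_g` already lies in `V'_g`: a simple summand `S` is excluded
from `V'_g` only if it occurs in some `V'_{g'}` with `b g < b g'`, and then `V''_g` occurs in
`V_{g'}`, so either `V''_g ≅ V''_{g'}` (forcing `b g = b g'`) or `b g = n(V''_g) > b g'`.
Consequently an isomorphism `V'_{g₁} ≅ V'_{g₂}` makes each `V''_{gᵢ}` occur in the other `V_{gⱼ}`;
if `V''_{g₁} ≇ V''_{g₂}` the hypothesis on the other composition factors gives both
`b g₁ > b g₂` and `b g₂ > b g₁`. -/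

theorem RepQ.Iso.symm {V₁ V₂ : RepQ W} : V₁.Iso V₂ → V₂.Iso V₁
  | ⟨e⟩ => ⟨e.symm⟩

section Occ

variable {A : Type} [Ring A] {E F M N : Type} [AddCommGroup E] [Module A E]
  [AddCommGroup F] [Module A F] [AddCommGroup M] [Module A M] [AddCommGroup N] [Module A N]

theorem Occ.of_injective {f : M →ₗ[A] N} (hf : Function.Injective f) :
    Occ A E M → Occ A E N
  | ⟨S, ⟨e⟩⟩ => ⟨S.map f, ⟨e.trans (Submodule.equivMapOfInjective f hf S)⟩⟩

theorem Occ.of_linearEquiv_s3 (φ : M ≃ₗ[A] N) : Occ A E M → Occ A E N :=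
  Occ.of_injective (f := φ.toLinearMap) φ.injective

theorem Occ.of_submodule_s3 {P : Submodule A M} : Occ A E P → Occ A E M :=
  Occ.of_injective P.injective_subtype

theorem Occ.congr_left (e : E ≃ₗ[A] F) : Occ A F M → Occ A E M
  | ⟨S, ⟨f⟩⟩ => ⟨S, ⟨e.trans f⟩⟩

theorem Occ.of_le_s3 {S P : Submodule A M} (e : E ≃ₗ[A] S) (h : S ≤ P) : Occ A E P :=
  ⟨S.comap P.subtype, ⟨e.trans (Submodule.comapSubtypeEquivOfLe h).symm⟩⟩

end Occ

section Strata

variable {G : Type} {b : G → ℕ} {V V'' : G → RepQ W} {n : RepQ W → ℕ}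

theorem iso_or_lt_of_occ (hirr : ∀ g, (V'' g).IsIrr) (hnb : ∀ g, n (V'' g) = b g)
    (hother : ∀ g (E : RepQ W), E.IsIrr → Occ (GA W) E.carrier (V g).carrier →
      ¬ E.Iso (V'' g) → n E > b g)
    {g g' : G} (h : Occ (GA W) (V'' g).carrier (V g').carrier) :
    (V'' g).Iso (V'' g') ∨ b g' < b g := by
  refine or_iff_not_imp_left.2 fun hiso => ?_
  simpa only [hnb] using hother g' (V'' g) (hirr g) h hiso

theorem occ_V''_V' {nu : ℕ} (hb : ∀ g, b g ≤ nu) {V' : ∀ g, Submodule (GA W) (V g).carrier}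
    (htop : ∀ g, b g = nu → V' g = ⊤)
    (hrec : ∀ g, b g < nu → V' g = sSup {S : Submodule (GA W) (V g).carrier |
      IsSimpleModule (GA W) ↥S ∧ ∀ g', b g < b g' → ¬ Occ (GA W) ↥S ↥(V' g')})
    (hn : ∀ E F : RepQ W, E.Iso F → n E = n F)
    (hirr : ∀ g, (V'' g).IsIrr)
    (hmult : ∀ g, OccMultOne (GA W) (V'' g).carrier (V g).carrier)
    (hnb : ∀ g, n (V'' g) = b g)
    (hother : ∀ g (E : RepQ W), E.IsIrr → Occ (GA W) E.carrier (V g).carrier →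
      ¬ E.Iso (V'' g) → n E > b g) (g : G) :
    Occ (GA W) (V'' g).carrier (V' g) := by
  obtain ⟨S, ⟨e⟩⟩ := (hmult g).1
  refine Occ.of_le_s3 e ?_
  rcases (hb g).eq_or_lt with heq | hlt
  · exact htop g heq ▸ le_top
  rw [hrec g hlt]
  refine le_sSup ⟨?_, fun g' hlt' hocc => ?_⟩
  · have : IsSimpleModule (GA W) (V'' g).carrier := hirr g
    exact IsSimpleModule.congr e.symm
  rcases iso_or_lt_of_occ hirr hnb hother (hocc.congr_left e).of_submodule_s3 with hiso | hlt''
  · exact hlt'.ne (hnb g ▸ hnb g' ▸ hn _ _ hiso)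
  · exact hlt''.asymm hlt'

end Strata

/-- If `V'_[g₁] ≅ V'_[g₂]` then `V''_[g₁] ≅ V''_[g₂]`: the partition into
substrata refines the partition into strata. -/
theorem substrata_refine_strata (G : Type) (nu : ℕ) (b : G → ℕ) (hb : ∀ g, b g ≤ nu)
    (V : G → RepQ W) (V' : ∀ g, Submodule (GA W) (V g).carrier)
    (htop : ∀ g, b g = nu → V' g = ⊤)
    (hrec : ∀ g, b g < nu → V' g = sSup {S : Submodule (GA W) (V g).carrier |
      IsSimpleModule (GA W) ↥S ∧ ∀ g', b g < b g' → ¬ Occ (GA W) ↥S ↥(V' g')})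
    (n : RepQ W → ℕ) (hn : ∀ E F : RepQ W, E.Iso F → n E = n F)
    (V'' : G → RepQ W) (hirr : ∀ g, (V'' g).IsIrr)
    (hmult : ∀ g, OccMultOne (GA W) (V'' g).carrier (V g).carrier)
    (hnb : ∀ g, n (V'' g) = b g)
    (hother : ∀ g (E : RepQ W), E.IsIrr → Occ (GA W) E.carrier (V g).carrier →
      ¬ E.Iso (V'' g) → n E > b g) :
    ∀ g₁ g₂ : G, Nonempty (↥(V' g₁) ≃ₗ[GA W] ↥(V' g₂)) → (V'' g₁).Iso (V'' g₂) := by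
  intro g₁ g₂ ⟨φ⟩
  have hocc := occ_V''_V' hb htop hrec hn hirr hmult hnb hother
  have h₁₂ := ((hocc g₁).of_linearEquiv_s3 φ).of_submodule_s3
  have h₂₁ := ((hocc g₂).of_linearEquiv_s3 φ.symm).of_submodule_s3
  rcases iso_or_lt_of_occ hirr hnb hother h₁₂ with h | h₁
  · exact h
  rcases iso_or_lt_of_occ hirr hnb hother h₂₁ with h | h₂
  · exact h.symm
  exact absurd h₂ h₁.asymm
end
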